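/- Let q ∈ UCRPQ(a, a*) over a finite alphabet Σ and let A ⊆ Σ. If q is A-bounded, then q ≡ q(A, Z), where Z = ‖q‖³ · N · |vars(q)| · Π_{w ∈ W} |w|. -/

import Mathlib

namespace Paper

/-! ## Words -/

/-- `wpow w n` is the word `w` repeated `n` times. -/
def wpow {α : Type} (w : List α) (n : ℕ) : List α := (List.replicate n w).flatten

/-! ## Graph databases -/

/-- A graph database over the alphabet `α`: a finite set of vertices together with
labelled edges. -/
structure GDB (α : Type) : Type 1 where
  V : Type
  finV : Finite V
  edges : Set (V × α × V)

/-! ## Conjunctive queries -/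

/-- A (Boolean) conjunctive query over `α`: a finite set of variables and a set of
atoms `x —a→ y` with `a ∈ α`. -/
structure CQ (α : Type) : Type 1 where
  V : Type
  finV : Finite V
  atoms : Set (V × α × V)

variable {α : Type}

/-- `h` is a homomorphism from the CQ `p` to the CQ `p'`. -/
def CQ.Hom (p p' : CQ α) (h : p.V → p'.V) : Prop :=
  ∀ x a y, (x, a, y) ∈ p.atoms → (h x, a, h y) ∈ p'.atoms

/-- There is a homomorphism from the CQ `p` to the CQ `p'`. -/
def CQ.homTo (p p' : CQ α) : Prop := ∃ h, p.Hom p' h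

/-- There is a homomorphism from the CQ `p` to the graph database `G`. -/
def CQ.homToG (p : CQ α) (G : GDB α) : Prop :=
  ∃ h : p.V → G.V, ∀ x a y, (x, a, y) ∈ p.atoms → (h x, a, h y) ∈ G.edges

/-! ## CRPQs -/

/-- A (Boolean) conjunctive regular path query over alphabet `α` with variables `V`:
a finite conjunction of atoms `src i —lang i→ tgt i`. -/
structure CRPQ (α V : Type) where
  k : ℕ
  src : Fin k → V
  lang : Fin k → Set (List α)
  tgt : Fin k → V

variable {V : Type}

/-! ## Expansions -/

/-- Variables of an expansion before collapsing equality atoms: the original variables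
plus, for each atom `i` expanded by the word `w i`, the fresh variables
`z_1, …, z_{|w i| - 1}`. -/
def RawVar (q : CRPQ α V) (w : Fin q.k → List α) : Type :=
  V ⊕ (Σ i : Fin q.k, Fin ((w i).length - 1))

instance {q : CRPQ α V} [Finite V] {w : Fin q.k → List α} : Finite (RawVar q w) := by
  unfold RawVar; infer_instance

/-- The `j`-th variable (`0 ≤ j ≤ |w i|`) on the path expanding atom `i`:
position `0` is the source variable, position `|w i|` the target variable, and the
intermediate positions are fresh variables. -/
def node (q : CRPQ α V) (w : Fin q.k → List α) (i : Fin q.k) (j : ℕ) : RawVar q w :=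
  if j = 0 then Sum.inl (q.src i)
  else if j = (w i).length then Sum.inl (q.tgt i)
  else if h : j - 1 < (w i).length - 1 then Sum.inr ⟨i, ⟨j - 1, h⟩⟩
  else Sum.inl (q.src i)

/-- The equality atoms produced by `ε`-expansions: `src i = tgt i` whenever `w i = ε`.
(The expansion collapses the equivalence they generate.) -/
def eqRel (q : CRPQ α V) (w : Fin q.k → List α) : RawVar q w → RawVar q w → Prop :=
  fun x y => ∃ i, w i = [] ∧ x = Sum.inl (q.src i) ∧ y = Sum.inl (q.tgt i)

/-- The expansion of the CRPQ `q` obtained by expanding each atom `i` with the word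
`w i`: each atom is replaced by its `w i`-expansion, and equality atoms are collapsed. -/
def expansion (q : CRPQ α V) [Finite V] (w : Fin q.k → List α) : CQ α where
  V := Quot (eqRel q w)
  finV := Finite.of_surjective (Quot.mk _) fun x => Quot.exists_rep x
  atoms := { t | ∃ (i : Fin q.k) (j : ℕ) (hj : j < (w i).length),
    t = (Quot.mk _ (node q w i j), (w i).get ⟨j, hj⟩, Quot.mk _ (node q w i (j + 1))) }

/-- `Exp q`: the set of all expansions of the CRPQ `q`. -/
def Exp (q : CRPQ α V) [Finite V] : Set (CQ α) :=
  { p | ∃ w : Fin q.k → List α, (∀ i, w i ∈ q.lang i) ∧ p = expansion q w }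

/-- `Expm q m`: the set of all `m`-expansions of the CRPQ `q`. -/
def Expm (q : CRPQ α V) [Finite V] (m : ℕ) : Set (CQ α) :=
  { p | ∃ w : Fin q.k → List α,
      (∀ i, w i ∈ q.lang i) ∧ (∀ i, (w i).length ≤ m) ∧ p = expansion q w }

/-! ## UCRPQs, satisfaction, containment, boundedness -/

/-- The set of expansions of a UCRPQ (a finite disjunction of CRPQs). -/
def ExpU (Q : List (CRPQ α V)) [Finite V] : Set (CQ α) :=
  { p | ∃ q ∈ Q, p ∈ Exp q }

/-- The set of `m`-expansions of a UCRPQ. -/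
def ExpmU (Q : List (CRPQ α V)) [Finite V] (m : ℕ) : Set (CQ α) :=
  { p | ∃ q ∈ Q, p ∈ Expm q m }

/-- Satisfaction of a (possibly infinite) disjunction of CQs by a graph database. -/
def SatSet (S : Set (CQ α)) (G : GDB α) : Prop := ∃ p ∈ S, p.homToG G

/-- `G ⊨ Q` for a UCRPQ `Q`: some expansion of `Q` maps homomorphically into `G`. -/
def Sat (Q : List (CRPQ α V)) [Finite V] (G : GDB α) : Prop := SatSet (ExpU Q) G

/-- Containment of queries (viewed as properties of graph databases):
every graph database satisfying the first satisfies the second. -/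
def Contained (P P' : GDB α → Prop) : Prop := ∀ G, P G → P' G

/-- Equivalence of queries (viewed as properties of graph databases). -/
def QEquiv (P P' : GDB α → Prop) : Prop := ∀ G, P G ↔ P' G

/-- A query is bounded iff it is equivalent to some UCQ (finite disjunction of CQs). -/
def Bounded (P : GDB α → Prop) : Prop :=
  ∃ Φ : List (CQ α), ∀ G, P G ↔ ∃ p ∈ Φ, p.homToG G


/-! ## The class UCRPQ(SSF, w*) -/

/-- An atom language in the class (SSF, w*): either a succinct star-free expression
(denoting a finite language), or `w*` for a word `w`. -/
inductive AtomLang (α : Type) : Type where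
  | ssf (L : Set (List α)) (h : L.Finite) : AtomLang α
  | star (w : List α) : AtomLang α

variable {α V : Type}

/-- The language denoted by an atom of the class (SSF, w*). -/
def AtomLang.language : AtomLang α → Set (List α)
  | .ssf L _ => L
  | .star w => { u | ∃ n, u = wpow w n }

/-- A CRPQ all of whose atom languages are SSF expressions or expressions `w*`. -/
structure SCRPQ (α V : Type) where
  k : ℕ
  src : Fin k → V
  lang : Fin k → AtomLang α
  tgt : Fin k → V

/-- The underlying CRPQ of an SCRPQ. -/
def SCRPQ.toCRPQ (q : SCRPQ α V) : CRPQ α V :=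
  ⟨q.k, q.src, fun i => (q.lang i).language, q.tgt⟩

/-- The underlying UCRPQ of a UCRPQ in the class (SSF, w*). -/
def toU (Q : List (SCRPQ α V)) : List (CRPQ α V) := Q.map SCRPQ.toCRPQ

/-- Satisfaction for UCRPQs of the class (SSF, w*). -/
def SatS (Q : List (SCRPQ α V)) [Finite V] (G : GDB α) : Prop := Sat (toU Q) G

/-- `AtomLang.cut m`: replace `w*` with `w^{≤m} = {w^n : n ≤ m}`; SSF atoms unchanged. -/
def AtomLang.cut (m : ℕ) : AtomLang α → AtomLang α
  | .ssf L h => .ssf L h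
  | .star w => .ssf (wpow w '' Set.Iic m) ((Set.finite_Iic m).image _)

/-- `q(m)` for a CRPQ: replace every expression `w*` with `w^{≤m}`. -/
def SCRPQ.cut (m : ℕ) (q : SCRPQ α V) : SCRPQ α V :=
  ⟨q.k, q.src, fun i => (q.lang i).cut m, q.tgt⟩

/-- `q(m)` for a UCRPQ: replace every expression `w*` with `w^{≤m}`. -/
def qcut (Q : List (SCRPQ α V)) (m : ℕ) : List (SCRPQ α V) := Q.map (SCRPQ.cut m)

/-- `‖Q‖`: number of atoms of the UCRPQ `Q`. -/
def natoms (Q : List (SCRPQ α V)) : ℕ := (Q.map SCRPQ.k).sum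

/-- The set `W` of words `w` such that `w*` labels a recursive atom of `Q`. -/
def recWords (Q : List (SCRPQ α V)) : Set (List α) :=
  { w | ∃ q ∈ Q, ∃ i : Fin q.k, q.lang i = AtomLang.star w }

/-- `N`: the maximum length of a word in the language of a non-recursive atom of `Q`. -/
noncomputable def nrBound (Q : List (SCRPQ α V)) : ℕ :=
  sSup { n | ∃ q ∈ Q, ∃ i : Fin q.k, ∃ (L : Set (List α)) (h : L.Finite),
    q.lang i = AtomLang.ssf L h ∧ ∃ u ∈ L, u.length = n }

/-- `Z := ‖Q‖³ · N · |vars(Q)| · Π_{w ∈ W} |w|`. -/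
noncomputable def Zbound (Q : List (SCRPQ α V)) [Fintype V] : ℕ :=
  natoms Q ^ 3 * nrBound Q * Fintype.card V * ∏ᶠ w ∈ recWords Q, w.length

/-- `Z⁺ := ‖Q‖ · Z + 1`. -/
noncomputable def Zplus (Q : List (SCRPQ α V)) [Fintype V] : ℕ :=
  natoms Q * Zbound Q + 1

/-! ## Letter-boundedness -/

/-- Membership in the class UCRPQ(SSF, a*): atoms are SSF or `a*` for a letter `a`. -/
def AtomLang.inSSFaStar : AtomLang α → Prop
  | .ssf _ _ => True
  | .star w => ∃ a, w = [a]

/-- Membership in the class UCRPQ(a, a*): every atom language is `{a}` or `{a}*`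
for a letter `a`. -/
def AtomLang.in_a_aStar : AtomLang α → Prop
  | .ssf L _ => ∃ a : α, L = {[a]}
  | .star w => ∃ a, w = [a]

/-- An atom language which is an SSF expression or `a*` only for letters `a ∉ A`. -/
def AtomLang.okOutside (A : Set α) : AtomLang α → Prop
  | .ssf _ _ => True
  | .star w => ∃ a, a ∉ A ∧ w = [a]

open Classical in
/-- Replace `a*` with `a^{≤m} = {ε, a, …, a^m}` for every letter `a ∈ A`. -/
noncomputable def AtomLang.restrict (A : Set α) (m : ℕ) : AtomLang α → AtomLang α
  | .ssf L h => .ssf L h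
  | .star w => if ∃ a ∈ A, w = [a]
      then .ssf (wpow w '' Set.Iic m) ((Set.finite_Iic m).image _)
      else .star w

/-- `q(A, m)` (also `q[A ↦ m]`) for a CRPQ. -/
noncomputable def SCRPQ.restrict (A : Set α) (m : ℕ) (q : SCRPQ α V) : SCRPQ α V :=
  ⟨q.k, q.src, fun i => (q.lang i).restrict A m, q.tgt⟩

/-- `Q(A, m)` (also `Q[A ↦ m]`): the result of replacing in `Q` every atom language
`a*` with `a ∈ A` by `a^{≤m}`. -/
noncomputable def qrestrict (Q : List (SCRPQ α V)) (A : Set α) (m : ℕ) :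
    List (SCRPQ α V) := Q.map (SCRPQ.restrict A m)

/-- `Q` is `A`-bounded: `Q` is equivalent to some UCRPQ whose atom languages are SSF
expressions or expressions `a*` only for letters `a ∉ A`. -/
def BddIn (Q : List (SCRPQ α V)) [Finite V] (A : Set α) : Prop :=
  ∃ (n : ℕ) (Q' : List (SCRPQ α (Fin n))),
    (∀ d ∈ Q', ∀ i : Fin d.k, (d.lang i).okOutside A) ∧ QEquiv (SatS Q) (SatS Q')

/-!
The inclusion `q(A, Z) ⊑ q` holds because restricting only shrinks languages. Conversely, let a
disjunct `d` of `q` hold in `G` through words `w`, and let `I` be its atoms `a*` with `a ∈ A`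
whose word is longer than `2|V|`. Pumping these runs to a length `T` gives another expansion of
`d`, which satisfies `q`; by `A`-boundedness it does so through a disjunct `d'` whose `A`-star
words have length at most some `m` independent of the database, and `T` is taken much larger than
`m`. The pumped runs are then folded back onto the original ones: on each run at most `|V|`
positions carry a variable of `d'`, the fold advances by one right after each of them, and the
rest of the run is absorbed by a single jump placed more than `m` away from all of them.
Single-letter atoms of `d'` and stars of letters outside `A` keep their words, while a walk of
length `≤ m` along a letter of `A` becomes one of length at most `|V| + 2|V|·‖q‖ + |V|`, which is
at most `‖q‖³·|V| = Z` as `‖q‖ ≥ 2`. When `d` has no `A`-star atom nothing needs to change, and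
when `q` has no star-free atom (so that `Z = 0`) every atom can be expanded by `ε`.
-/

section Walks

variable {X Y β : Type} {E : Set (X × β × X)} {a : β} {m n : ℕ} {u v x : X}

def WordWalk (E : Set (X × β × X)) (w : List β) (u v : X) : Prop :=
  ∃ f : ℕ → X, f 0 = u ∧ f w.length = v ∧
    ∀ (t : ℕ) (ht : t < w.length), (f t, w.get ⟨t, ht⟩, f (t + 1)) ∈ E

def LetterWalk (E : Set (X × β × X)) (a : β) (n : ℕ) (u v : X) : Prop :=
  ∃ f : ℕ → X, f 0 = u ∧ f n = v ∧ ∀ t < n, (f t, a, f (t + 1)) ∈ E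

theorem wordWalk_replicate : WordWalk E (List.replicate n a) u v ↔ LetterWalk E a n u v := by
  simp [WordWalk, LetterWalk]

theorem wordWalk_singleton {c : β} : WordWalk E [c] u v ↔ (u, c, v) ∈ E := by
  constructor
  · rintro ⟨f, rfl, rfl, hf⟩
    exact hf 0 (by simp)
  · intro h
    refine ⟨fun t => if t = 0 then u else v, rfl, rfl, fun t ht => ?_⟩
    obtain rfl : t = 0 := by simpa using ht
    exact h

theorem WordWalk.map {E' : Set (Y × β × Y)} (g : X → Y)
    (hg : ∀ u c v, (u, c, v) ∈ E → (g u, c, g v) ∈ E') {w : List β}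
    (h : WordWalk E w u v) : WordWalk E' w (g u) (g v) := by
  obtain ⟨f, rfl, rfl, hf⟩ := h
  exact ⟨g ∘ f, rfl, rfl, fun t ht => hg _ _ _ (hf t ht)⟩

theorem WordWalk.nil (x : X) : WordWalk E [] x x :=
  ⟨fun _ => x, rfl, rfl, fun _ h => absurd h (Nat.not_lt_zero _)⟩

theorem LetterWalk.refl (u : X) : LetterWalk E a 0 u u :=
  ⟨fun _ => u, rfl, rfl, by simp⟩

theorem LetterWalk.single (h : (u, a, v) ∈ E) : LetterWalk E a 1 u v :=
  ⟨fun t => if t = 0 then u else v, rfl, rfl, fun t ht => by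
    obtain rfl : t = 0 := by omega
    exact h⟩

theorem LetterWalk.of_seg (f : ℕ → X) {i j : ℕ} (hij : i ≤ j)
    (hf : ∀ t, i ≤ t → t < j → (f t, a, f (t + 1)) ∈ E) :
    LetterWalk E a (j - i) (f i) (f j) := by
  refine ⟨fun s => f (i + s), rfl, by simp only [Nat.add_sub_cancel' hij], fun t ht => ?_⟩
  simpa [add_assoc] using hf (i + t) (by omega) (by omega)

theorem LetterWalk.trans (h₁ : LetterWalk E a m u x) (h₂ : LetterWalk E a n x v) :
    LetterWalk E a (m + n) u v := by
  obtain ⟨f, rfl, rfl, hf⟩ := h₁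
  obtain ⟨g, hg0, rfl, hg⟩ := h₂
  refine ⟨fun t => if t < m then f t else g (t - m), ?_, by simp, fun t ht => ?_⟩
  · rcases Nat.eq_zero_or_pos m with rfl | hm
    · simp [hg0]
    · simp [hm]
  · rcases Nat.lt_or_ge t m with h | h
    · rcases Nat.lt_or_ge (t + 1) m with h' | h'
      · simpa [h, h'] using hf t h
      · obtain rfl : m = t + 1 := by omega
        simpa [h, hg0] using hf t h
    · simpa [show ¬ t < m by omega, show ¬ t + 1 < m by omega,
        show t + 1 - m = t - m + 1 by omega] using hg (t - m) (by omega)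

theorem LetterWalk.mono {E' : Set (X × β × X)} (hE : ∀ u v, (u, a, v) ∈ E → (u, a, v) ∈ E')
    (h : LetterWalk E a n u v) : LetterWalk E' a n u v := by
  obtain ⟨f, rfl, rfl, hf⟩ := h
  exact ⟨f, rfl, rfl, fun t ht => hE _ _ (hf t ht)⟩

theorem LetterWalk.map {E' : Set (Y × β × Y)} (g : X → Y)
    (hg : ∀ u v, (u, a, v) ∈ E → (g u, a, g v) ∈ E') (h : LetterWalk E a n u v) :
    LetterWalk E' a n (g u) (g v) := by
  obtain ⟨f, rfl, rfl, hf⟩ := h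
  exact ⟨g ∘ f, rfl, rfl, fun t ht => hg _ _ (hf t ht)⟩

/-- A walk longer than `S.card` repeats an edge, and the loop in between can be cut out. -/
theorem LetterWalk.exists_le_card (S : Finset (X × β × X))
    (hS : ∀ u v, (u, a, v) ∈ E → (u, a, v) ∈ S) (h : LetterWalk E a n u v) :
    ∃ n' ≤ S.card, LetterWalk E a n' u v := by
  induction n using Nat.strong_induction_on with
  | _ n ih =>
  by_cases hn : n ≤ S.card
  · exact ⟨n, hn, h⟩
  obtain ⟨f, rfl, rfl, hf⟩ := h
  obtain ⟨t, ht, t', ht', hne, heq⟩ := Finset.exists_ne_map_eq_of_card_lt_of_maps_to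
    (s := Finset.range n) (f := fun t => (f t, a, f (t + 1))) (by simpa using hn)
    (fun t ht => hS _ _ (hf t (by simpa using ht)))
  wlog hlt : t < t' generalizing t t'
  · exact this t' ht' t ht hne.symm heq.symm (by omega)
  simp only [Finset.mem_range] at ht ht'
  have hft : f t = f t' := congrArg Prod.fst heq
  have hpre := LetterWalk.of_seg (E := E) (a := a) f (Nat.zero_le t)
    fun s _ hs => hf s (by omega)
  have hsuf := LetterWalk.of_seg (E := E) (a := a) f (le_of_lt ht')
    fun s _ hs => hf s hs
  rw [← hft] at hsuf
  exact ih _ (by omega) (hpre.trans hsuf)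

end Walks

section Expansion

variable [Finite V] (q : CRPQ α V) (w : Fin q.k → List α)

def varVertex (x : V) : (expansion q w).V := Quot.mk _ (Sum.inl x)

def pathVertex (i : Fin q.k) (t : ℕ) : (expansion q w).V := Quot.mk _ (node q w i t)

def expansionLift {Y : Type} (ρ : V → Y) (f : Fin q.k → ℕ → Y)
    (h : ∀ i, w i = [] → ρ (q.src i) = ρ (q.tgt i)) : (expansion q w).V → Y :=
  Quot.lift (Sum.elim ρ fun z => f z.1 (z.2 + 1)) (by rintro _ _ ⟨i, hi, rfl, rfl⟩; exact h i hi)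

variable {q w}

theorem pathVertex_zero (i : Fin q.k) : pathVertex q w i 0 = varVertex q w (q.src i) := rfl

theorem varVertex_src_eq_tgt {i : Fin q.k} (h : w i = []) :
    varVertex q w (q.src i) = varVertex q w (q.tgt i) :=
  Quot.sound ⟨i, h, rfl, rfl⟩

theorem pathVertex_length (i : Fin q.k) :
    pathVertex q w i (w i).length = varVertex q w (q.tgt i) := by
  by_cases h : (w i).length = 0
  · rw [h, pathVertex_zero]
    exact varVertex_src_eq_tgt (List.length_eq_zero_iff.mp h)
  · have hn : node q w i (w i).length = Sum.inl (q.tgt i) := by simp only [node, h, ↓reduceIte]; rfl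
    rw [pathVertex, hn]
    rfl

theorem mem_atoms_expansion {u v : (expansion q w).V} {c : α} :
    (u, c, v) ∈ (expansion q w).atoms ↔ ∃ (i : Fin q.k) (t : ℕ) (ht : t < (w i).length),
      u = pathVertex q w i t ∧ c = (w i).get ⟨t, ht⟩ ∧ v = pathVertex q w i (t + 1) := by
  constructor
  · rintro ⟨i, t, ht, h⟩
    cases h
    exact ⟨i, t, ht, rfl, rfl, rfl⟩
  · rintro ⟨i, t, ht, rfl, rfl, rfl⟩
    exact ⟨i, t, ht, rfl⟩

theorem pathVertex_mem_atoms (i : Fin q.k) {t : ℕ} (ht : t < (w i).length) :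
    (pathVertex q w i t, (w i).get ⟨t, ht⟩, pathVertex q w i (t + 1)) ∈ (expansion q w).atoms :=
  ⟨i, t, ht, rfl⟩

theorem wordWalk_pathVertex (i : Fin q.k) :
    WordWalk (expansion q w).atoms (w i) (varVertex q w (q.src i)) (varVertex q w (q.tgt i)) :=
  ⟨pathVertex q w i, pathVertex_zero i, pathVertex_length i, fun _ ht => pathVertex_mem_atoms i ht⟩

theorem letterWalk_pathVertex {i : Fin q.k} {a : α} {n : ℕ} (hw : w i = List.replicate n a)
    {p p' : ℕ} (hpp' : p ≤ p') (hp' : p' ≤ n) :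
    LetterWalk (expansion q w).atoms a (p' - p) (pathVertex q w i p) (pathVertex q w i p') :=
  LetterWalk.of_seg _ hpp' fun t _ ht => by
    have ht' : t < (w i).length := by simp [hw]; omega
    simpa [hw] using pathVertex_mem_atoms i ht'

section Lift

variable {Y : Type} {ρ : V → Y} {f : Fin q.k → ℕ → Y}
  {h : ∀ i, w i = [] → ρ (q.src i) = ρ (q.tgt i)}

@[simp] theorem expansionLift_varVertex (x : V) :
    expansionLift q w ρ f h (varVertex q w x) = ρ x := rfl

theorem expansionLift_pathVertex {i : Fin q.k} {t : ℕ} (h0 : f i 0 = ρ (q.src i))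
    (hl : f i (w i).length = ρ (q.tgt i)) (ht : t ≤ (w i).length) :
    expansionLift q w ρ f h (pathVertex q w i t) = f i t := by
  rcases Nat.eq_zero_or_pos t with rfl | ht0
  · rw [pathVertex_zero, expansionLift_varVertex, h0]
  rcases ht.eq_or_lt with rfl | hlt
  · rw [pathVertex_length, expansionLift_varVertex, hl]
  · have : t - 1 < (w i).length - 1 := by omega
    have hn : node q w i t = Sum.inr ⟨i, ⟨t - 1, this⟩⟩ := by
      simp only [node, ht0.ne', hlt.ne, this, ↓reduceIte, ↓reduceDIte]; rfl
    rw [pathVertex, hn]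
    show f i (t - 1 + 1) = f i t
    rw [Nat.sub_add_cancel ht0]

end Lift

theorem expansion_homToG_iff (G : GDB α) : (expansion q w).homToG G ↔
    ∃ ρ : V → G.V, ∀ i, WordWalk G.edges (w i) (ρ (q.src i)) (ρ (q.tgt i)) := by
  constructor
  · rintro ⟨g, hg⟩
    exact ⟨g ∘ varVertex q w, fun i => (wordWalk_pathVertex i).map g hg⟩
  · rintro ⟨ρ, hρ⟩
    choose f hf0 hfl hf using hρ
    refine ⟨expansionLift q w ρ f fun i hi => ?_, fun u c v huv => ?_⟩
    · rw [← hf0 i, ← hfl i, hi, List.length_nil]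
    · obtain ⟨i, t, ht, rfl, rfl, rfl⟩ := mem_atoms_expansion.1 huv
      rw [expansionLift_pathVertex (hf0 i) (hfl i) ht.le,
        expansionLift_pathVertex (hf0 i) (hfl i) ht]
      exact hf i t ht

def interiorPos : (expansion q w).V → Option (Fin q.k × ℕ) :=
  expansionLift q w (fun _ => none)
    (fun i t => if 0 < t ∧ t < (w i).length then some (i, t) else none) fun _ _ => rfl

theorem interiorPos_pathVertex {i : Fin q.k} {t : ℕ} (ht : t ≤ (w i).length) :
    interiorPos (pathVertex q w i t) = if 0 < t ∧ t < (w i).length then some (i, t) else none :=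
  expansionLift_pathVertex (by simp) (by simp) ht

theorem eq_of_pathVertex_eq {i j : Fin q.k} {t p : ℕ} (ht : t ≤ (w i).length)
    (hp : 0 < p ∧ p < (w j).length) (h : pathVertex q w i t = pathVertex q w j p) :
    i = j ∧ t = p := by
  have := congrArg interiorPos h
  rw [interiorPos_pathVertex ht, interiorPos_pathVertex hp.2.le, if_pos hp] at this
  split_ifs at this
  simp_all

def position : (expansion q w).V → ℕ :=
  expansionLift q w (fun _ => 0) (fun i t => if t < (w i).length then t else 0) fun _ _ => rfl

theorem position_pathVertex {i : Fin q.k} {t : ℕ} (ht : t < (w i).length) :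
    position (pathVertex q w i t) = t := by
  rw [position, expansionLift_pathVertex (by simp) (by simp) ht.le, if_pos ht]

end Expansion

section Semantics

def CQ.toGDB (p : CQ α) : GDB α := ⟨p.V, p.finV, p.atoms⟩

def SatWith (G : GDB α) (d : SCRPQ α V) (w : Fin d.k → List α) : Prop :=
  (∀ i, w i ∈ (d.lang i).language) ∧
    ∃ ρ : V → G.V, ∀ i, WordWalk G.edges (w i) (ρ (d.src i)) (ρ (d.tgt i))

theorem satS_iff [Finite V] {Q : List (SCRPQ α V)} {G : GDB α} :
    SatS Q G ↔ ∃ d ∈ Q, ∃ w, SatWith G d w := by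
  simp only [SatS, Sat, SatSet, ExpU, Exp, toU, List.mem_map]
  constructor
  · rintro ⟨_, ⟨_, ⟨d, hd, rfl⟩, w, hw, rfl⟩, hG⟩
    exact ⟨d, hd, w, hw, (expansion_homToG_iff G).1 hG⟩
  · rintro ⟨d, hd, w, hw, hρ⟩
    exact ⟨_, ⟨_, ⟨d, hd, rfl⟩, w, hw, rfl⟩, (expansion_homToG_iff G).2 hρ⟩

theorem satWith_expansion [Finite V] {d : SCRPQ α V} {w : Fin d.k → List α}
    (hw : ∀ i, w i ∈ (d.lang i).language) : SatWith (expansion d.toCRPQ w).toGDB d w :=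
  ⟨hw, varVertex d.toCRPQ w, fun i => wordWalk_pathVertex (q := d.toCRPQ) (w := w) i⟩

theorem SatWith.of_homToG {V' : Type} [Finite V] {G : GDB α} {d : SCRPQ α V}
    {w : Fin d.k → List α} (hG : (expansion d.toCRPQ w).homToG G) {d' : SCRPQ α V'}
    {w' : Fin d'.k → List α} (h : SatWith (expansion d.toCRPQ w).toGDB d' w') :
    SatWith G d' w' := by
  obtain ⟨g, hg⟩ := hG
  obtain ⟨hw', ρ, hρ⟩ := h
  exact ⟨hw', g ∘ ρ, fun i => (hρ i).map g hg⟩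

end Semantics

section Languages

variable {A : Set α} {Z : ℕ}

theorem wpow_singleton (a : α) (n : ℕ) : wpow [a] n = List.replicate n a := by
  simp [wpow]

theorem mem_language_star_singleton {a : α} {u : List α} :
    u ∈ (AtomLang.star [a]).language ↔ ∃ n, u = List.replicate n a := by
  simp [AtomLang.language, wpow_singleton]

theorem replicate_mem_language_restrict {b : α} {n : ℕ} (h : b ∈ A → n ≤ Z) :
    List.replicate n b ∈ ((AtomLang.star [b]).restrict A Z).language := by
  by_cases hb : b ∈ A
  · rw [AtomLang.restrict, if_pos ⟨b, hb, rfl⟩]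
    exact ⟨n, h hb, wpow_singleton b n⟩
  · rw [AtomLang.restrict, if_neg (by simpa using hb)]
    exact ⟨n, (wpow_singleton b n).symm⟩

theorem language_restrict_subset (l : AtomLang α) :
    (l.restrict A Z).language ⊆ l.language := by
  cases l with
  | ssf L h => exact subset_rfl
  | star w =>
    rw [AtomLang.restrict]
    split
    · rintro _ ⟨n, -, rfl⟩
      exact ⟨n, rfl⟩
    · exact subset_rfl

theorem restrict_eq_self {l : AtomLang α} (h : ∀ b ∈ A, l ≠ .star [b]) : l.restrict A Z = l := by
  cases l with
  | ssf L hL => rfl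
  | star w =>
    rw [AtomLang.restrict, if_neg]
    rintro ⟨b, hb, rfl⟩
    exact h b hb rfl

theorem AtomLang.in_a_aStar_iff {l : AtomLang α} :
    l.in_a_aStar ↔ ∃ c, l = .ssf {[c]} (Set.finite_singleton _) ∨ l = .star [c] := by
  cases l <;> simp [AtomLang.in_a_aStar, eq_comm]

end Languages

section BoundedWitness

noncomputable def AtomLang.maxLength : AtomLang α → ℕ
  | .ssf _ h => h.toFinset.sup List.length
  | .star _ => 0

theorem AtomLang.length_le_maxLength {L : Set (List α)} {h : L.Finite} {u : List α}
    (hu : u ∈ L) : u.length ≤ (AtomLang.ssf L h).maxLength :=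
  Finset.le_sup (f := List.length) (h.mem_toFinset.mpr hu)

/-- Letters of `A` only label the paths of star-free atoms. -/
theorem LetterWalk.exists_le_sum_maxLength [Finite V] {A : Set α} {d : SCRPQ α V}
    {w : Fin d.k → List α} (hw : ∀ i, w i ∈ (d.lang i).language)
    (hA : ∀ i, (d.lang i).okOutside A) {b : α} (hb : b ∈ A) {n : ℕ}
    {u v : (expansion d.toCRPQ w).V} (h : LetterWalk (expansion d.toCRPQ w).atoms b n u v) :
    ∃ n' ≤ ∑ i, (d.lang i).maxLength, LetterWalk (expansion d.toCRPQ w).atoms b n' u v := by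
  classical
  let S := (Finset.univ.sigma fun i => Finset.range (d.lang i).maxLength).image fun z =>
    (pathVertex d.toCRPQ w z.1 z.2, b, pathVertex d.toCRPQ w z.1 (z.2 + 1))
  obtain ⟨n', hn', h'⟩ := h.exists_le_card S fun u v huv => by
    obtain ⟨i, t, ht, rfl, hbt, rfl⟩ := mem_atoms_expansion.1 huv
    refine Finset.mem_image.2 ⟨⟨i, t⟩, Finset.mem_sigma.2 ⟨Finset.mem_univ _, ?_⟩, rfl⟩
    have hwi := hw i
    have hAi := hA i
    cases hl : d.lang i with
    | ssf L hL =>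
      rw [hl] at hwi
      exact Finset.mem_range.2 (ht.trans_le (AtomLang.length_le_maxLength hwi))
    | star c =>
      rw [hl] at hwi hAi
      obtain ⟨a, haA, rfl⟩ := hAi
      obtain ⟨k, hk⟩ := mem_language_star_singleton.1 hwi
      simp only [hk, List.get_eq_getElem, List.getElem_replicate] at hbt
      exact absurd (hbt ▸ hb) haA
  exact ⟨n', hn'.trans (Finset.card_image_le.trans (by simp)), h'⟩

theorem exists_short_word {X : Type} {E : Set (X × α × X)} {A : Set α} {M : ℕ}
    (hE : ∀ b ∈ A, ∀ n x y, LetterWalk E b n x y → ∃ n' ≤ M, LetterWalk E b n' x y)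
    {l : AtomLang α} {u : List α} (hu : u ∈ l.language) {x y : X} (h : WordWalk E u x y) :
    ∃ u' ∈ l.language, WordWalk E u' x y ∧ ∀ b ∈ A, l = .star [b] → u'.length ≤ M := by
  by_cases hl : ∃ b ∈ A, l = .star [b]
  · obtain ⟨b, hb, rfl⟩ := hl
    obtain ⟨n, rfl⟩ := mem_language_star_singleton.1 hu
    obtain ⟨n', hn', h'⟩ := hE b hb n x y (wordWalk_replicate.1 h)
    refine ⟨List.replicate n' b, mem_language_star_singleton.2 ⟨n', rfl⟩,
      wordWalk_replicate.2 h', ?_⟩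
    rintro b' - hb'
    cases hb'
    simpa using hn'
  · exact ⟨u, hu, h, fun b hb hl' => (hl ⟨b, hb, hl'⟩).elim⟩

theorem SatWith.exists_short {G : GDB α} {A : Set α} {M : ℕ}
    (hG : ∀ b ∈ A, ∀ n x y, LetterWalk G.edges b n x y → ∃ n' ≤ M, LetterWalk G.edges b n' x y)
    {d : SCRPQ α V} {w : Fin d.k → List α} (h : SatWith G d w) :
    ∃ w', SatWith G d w' ∧ ∀ i, ∀ b ∈ A, d.lang i = .star [b] → (w' i).length ≤ M := by
  obtain ⟨hw, ρ, hρ⟩ := h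
  choose w' hw' hρ' hlen using fun i => exists_short_word hG (hw i) (hρ i)
  exact ⟨w', ⟨hw', ρ, hρ'⟩, hlen⟩

theorem BddIn.exists_bound [Finite V] {Q : List (SCRPQ α V)} {A : Set α} (hA : BddIn Q A) :
    ∃ m, ∀ G, SatS Q G → ∃ d ∈ Q, ∃ w, SatWith G d w ∧
      ∀ i, ∀ b ∈ A, d.lang i = .star [b] → (w i).length ≤ m := by
  obtain ⟨n, Q', hQ', hequiv⟩ := hA
  refine ⟨(Q'.map fun d => ∑ i, (d.lang i).maxLength).sum, fun G hG => ?_⟩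
  obtain ⟨d', hd', w', hw'⟩ := satS_iff.1 ((hequiv G).1 hG)
  have hle : ∑ i, (d'.lang i).maxLength ≤ (Q'.map fun d => ∑ i, (d.lang i).maxLength).sum :=
    List.single_le_sum (by simp) _ (List.mem_map_of_mem hd')
  obtain ⟨d, hd, w, hw⟩ :=
    satS_iff.1 ((hequiv _).2 (satS_iff.2 ⟨d', hd', w', satWith_expansion hw'.1⟩))
  obtain ⟨w₁, hw₁, hlen⟩ := hw.exists_short fun b hb n x y h =>
    (h.exists_le_sum_maxLength hw'.1 (hQ' d' hd') hb).imp fun _ h => ⟨h.1.trans hle, h.2⟩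
  exact ⟨d, hd, w₁, hw₁.of_homToG ((expansion_homToG_iff G).2 hw'.2), hlen⟩

end BoundedWitness

section Compression

theorem exists_far_from (S : Finset ℕ) (lo D : ℕ) :
    ∃ c, lo ≤ c ∧ c ≤ lo + S.card * (2 * D + 1) ∧ ∀ s ∈ S, c + D < s ∨ s + D < c := by
  by_contra! h
  have hsub : Finset.Icc lo (lo + S.card * (2 * D + 1)) ⊆
      S.biUnion fun s => Finset.Icc (s - D) (s + D) := by
    intro c hc
    obtain ⟨hlo, hhi⟩ := Finset.mem_Icc.1 hc
    obtain ⟨s, hs, h₁, h₂⟩ := h c hlo hhi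
    exact Finset.mem_biUnion.2 ⟨s, hs, Finset.mem_Icc.2 ⟨by omega, by omega⟩⟩
  have hsum : ∑ s ∈ S, (Finset.Icc (s - D) (s + D)).card ≤ S.card * (2 * D + 1) :=
    Finset.sum_le_card_nsmul _ _ _ fun s _ => by simp only [Nat.card_Icc]; omega
  have hcard := ((Finset.card_le_card hsub).trans Finset.card_biUnion_le).trans hsum
  rw [Nat.card_Icc] at hcard
  omega

/-- How positions `0, …, T` of a pumped run are sent back to positions `0, …, n` of the
original run; `P` holds the positions of the variables. -/
structure IsCompression (F : ℕ → ℕ) (P : Finset ℕ) (m T n B : ℕ) : Prop where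
  map_zero : F 0 = 0
  map_top : F T = n
  mono : Monotone F
  near_start : ∀ p ≤ m, F p ≤ B
  near_end : ∀ p, T ≤ p + m → n - F p ≤ B
  step : ∀ t ∈ P, t < T → F (t + 1) = F t + 1
  near_special : ∀ p ∈ P, ∀ L ≤ m, F (p + L) ≤ F p + B

theorem card_filter_eq_add_one {P : Finset ℕ} {p p' : ℕ → Prop} [DecidablePred p]
    [DecidablePred p'] {t : ℕ} (ht : t ∈ P) (hp : ∀ x, p x ↔ x = t ∨ p' x) (ht' : ¬ p' t) :
    (P.filter p).card = (P.filter p').card + 1 := by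
  rw [← Finset.card_insert_of_notMem (s := P.filter p') (a := t) (by simp [ht'])]
  congr 1
  ext x
  simp only [Finset.mem_filter, Finset.mem_insert, hp]
  constructor
  · rintro ⟨hx, rfl | hx'⟩
    exacts [Or.inl rfl, Or.inr ⟨hx, hx'⟩]
  · rintro (rfl | ⟨hx, hx'⟩)
    exacts [⟨ht, Or.inl rfl⟩, ⟨hx, Or.inr hx'⟩]

def cutCount (P : Finset ℕ) (T n c p : ℕ) : ℕ :=
  if p ≤ c then (P.filter (· < p)).card else n - (P.filter fun s => p ≤ s ∧ s < T).card

theorem isCompression_cutCount {P : Finset ℕ} {m T n c : ℕ} (hn : 2 * P.card ≤ n)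
    (hmc : m ≤ c) (hcT : c + m < T) (hfar : ∀ s ∈ P, c + m < s ∨ s + m < c) :
    IsCompression (cutCount P T n c) P m T n P.card := by
  classical
  set lo : ℕ → ℕ := fun p => (P.filter (· < p)).card
  set hi : ℕ → ℕ := fun p => (P.filter fun s => p ≤ s ∧ s < T).card
  have hlo p : lo p ≤ P.card := Finset.card_filter_le _ _
  have hhi p : hi p ≤ P.card := Finset.card_filter_le _ _
  have hlo_mono : Monotone lo := fun p p' hp => Finset.card_le_card fun s hs => by
    simp only [Finset.mem_filter] at hs ⊢
    exact ⟨hs.1, by omega⟩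
  have hhi_anti : Antitone hi := fun p p' hp => Finset.card_le_card fun s hs => by
    simp only [Finset.mem_filter] at hs ⊢
    exact ⟨hs.1, by omega⟩
  have hhiT : hi T = 0 :=
    Finset.card_eq_zero.2 (Finset.filter_eq_empty_iff.2 fun s _ h => by omega)
  have low {p} (hp : p ≤ c) : cutCount P T n c p = lo p := if_pos hp
  have high {p} (hp : c < p) : cutCount P T n c p = n - hi p := if_neg (by omega)
  refine ⟨by simp [low (Nat.zero_le c), lo], by rw [high (by omega), hhiT, Nat.sub_zero],
    fun p p' hp => ?_, fun p hp => (low (by omega)).trans_le (hlo p),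
    fun p hp => by rw [high (by omega)]; have := hhi p; omega, fun t ht htT => ?_,
    fun p hp L hL => ?_⟩
  · rcases le_or_gt p' c with h' | h'
    · rw [low (hp.trans h'), low h']
      exact hlo_mono hp
    rw [high h']
    rcases le_or_gt p c with h | h
    · rw [low h]
      have := hlo p
      have := hhi p'
      omega
    · rw [high h]
      have := hhi_anti hp
      have := hhi p
      omega
  · rcases hfar t ht with h | h
    · have : hi t = hi (t + 1) + 1 := card_filter_eq_add_one ht (fun x => by omega) (by omega)
      rw [high (by omega), high (by omega)]
      have := hhi t
      omega
    · rw [low (by omega), low (by omega)]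
      exact card_filter_eq_add_one ht (fun x => by omega) (by omega)
  · rcases hfar p hp with h | h
    · rw [high (by omega), high (by omega)]
      have := hhi p
      omega
    · rw [low (by omega), low (by omega)]
      have := hlo (p + L)
      omega

/-- The cut point is chosen more than `m` away from every special position, so that no walk of
length at most `m` from a special position crosses it. -/
theorem exists_isCompression (P : Finset ℕ) {m T n : ℕ} (hn : 2 * P.card ≤ n)
    (hT : 2 * m + P.card * (2 * m + 1) < T) : ∃ F, IsCompression F P m T n P.card := by
  obtain ⟨c, hmc, hcm, hfar⟩ := exists_far_from P m m
  exact ⟨_, isCompression_cutCount hn hmc (by omega) hfar⟩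

theorem exists_isCompression_forall {ι : Type} (P : Finset ℕ) {m T : ℕ} {n : ι → ℕ} {S : Set ι}
    (hn : ∀ i ∈ S, 2 * P.card ≤ n i) (hT : 2 * m + P.card * (2 * m + 1) < T) :
    ∃ F : ι → ℕ → ℕ, ∀ i ∈ S, IsCompression (F i) P m T (n i) P.card := by
  classical
  refine ⟨fun i => if hi : i ∈ S then (exists_isCompression P (hn i hi) hT).choose else id,
    fun i hi => ?_⟩
  simpa [hi] using (exists_isCompression P (hn i hi) hT).choose_spec

end Compression

section Pumping

variable {q : CRPQ α V} {I : Finset (Fin q.k)} {c : Fin q.k → α} {T : ℕ}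

def pumpWords (w : Fin q.k → List α) (I : Finset (Fin q.k)) (c : Fin q.k → α) (T : ℕ) :
    Fin q.k → List α :=
  fun i => if i ∈ I then List.replicate T (c i) else w i

variable {w : Fin q.k → List α}

theorem pumpWords_of_mem {i : Fin q.k} (hi : i ∈ I) :
    pumpWords w I c T i = List.replicate T (c i) := if_pos hi

theorem pumpWords_of_not_mem {i : Fin q.k} (hi : i ∉ I) : pumpWords w I c T i = w i :=
  if_neg hi

variable [Finite V]

def compress (F : Fin q.k → ℕ → ℕ) (hT : T ≠ 0) :
    (expansion q (pumpWords w I c T)).V → (expansion q w).V :=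
  expansionLift q _ (varVertex q w) (fun i t => pathVertex q w i (if i ∈ I then F i t else t))
    fun i hi => by
      have hiI : i ∉ I := fun h => by simp [pumpWords_of_mem h, hT] at hi
      rw [pumpWords_of_not_mem hiI] at hi
      exact varVertex_src_eq_tgt hi

variable {F : Fin q.k → ℕ → ℕ} {hT : T ≠ 0} {P : Finset ℕ} {m B : ℕ}

theorem compress_pathVertex_of_mem {i : Fin q.k} (hi : i ∈ I)
    (hF : IsCompression (F i) P m T (w i).length B) {t : ℕ} (ht : t ≤ T) :
    compress F hT (pathVertex q (pumpWords w I c T) i t) = pathVertex q w i (F i t) := by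
  have hl : (pumpWords w I c T i).length = T := by simp [pumpWords_of_mem hi]
  rw [compress, expansionLift_pathVertex, if_pos hi]
  · rw [if_pos hi, hF.map_zero, pathVertex_zero]
  · rw [if_pos hi, hl, hF.map_top, pathVertex_length]
  · rwa [hl]

theorem compress_pathVertex_of_not_mem {i : Fin q.k} (hi : i ∉ I) {t : ℕ}
    (ht : t ≤ (w i).length) :
    compress F hT (pathVertex q (pumpWords w I c T) i t) = pathVertex q w i t := by
  have hl : pumpWords w I c T i = w i := pumpWords_of_not_mem hi
  rw [compress, expansionLift_pathVertex, if_neg hi]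
  · rw [if_neg hi, pathVertex_zero]
  · rw [if_neg hi, hl, pathVertex_length]
  · rwa [hl]

theorem mem_atoms_pump {u v : (expansion q (pumpWords w I c T)).V} {b : α}
    (h : (u, b, v) ∈ (expansion q (pumpWords w I c T)).atoms) :
    (∃ i ∉ I, ∃ (t : ℕ) (ht : t < (w i).length), (w i).get ⟨t, ht⟩ = b ∧
      u = pathVertex q _ i t ∧ v = pathVertex q _ i (t + 1)) ∨
    (∃ i ∈ I, ∃ t < T, c i = b ∧ u = pathVertex q _ i t ∧ v = pathVertex q _ i (t + 1)) := by
  obtain ⟨i, t, ht, rfl, rfl, rfl⟩ := mem_atoms_expansion.1 h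
  by_cases hi : i ∈ I
  · simp only [pumpWords_of_mem hi, List.length_replicate] at ht
    exact Or.inr ⟨i, hi, t, ht, by simp [pumpWords_of_mem hi], rfl, rfl⟩
  · simp only [pumpWords_of_not_mem hi] at ht
    exact Or.inl ⟨i, hi, t, ht, by simp [pumpWords_of_not_mem hi], rfl, rfl⟩

def coreEdges (w : Fin q.k → List α) (I : Finset (Fin q.k)) (b : α) :
    Set ((expansion q w).V × α × (expansion q w).V) :=
  {e | ∃ i ∉ I, ∃ (t : ℕ) (ht : t < (w i).length), (w i).get ⟨t, ht⟩ = b ∧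
    e = (pathVertex q w i t, b, pathVertex q w i (t + 1))}

theorem coreEdges_subset {b : α} : coreEdges w I b ⊆ (expansion q w).atoms := by
  rintro _ ⟨i, -, t, ht, rfl, rfl⟩
  exact pathVertex_mem_atoms i ht

theorem LetterWalk.exists_le_coreEdges {b : α} {z : ℕ}
    (hz : ∀ i ∉ I, b ∈ w i → (w i).length ≤ z)
    {n : ℕ} {x y : (expansion q w).V} (h : LetterWalk (coreEdges w I b) b n x y) :
    ∃ n' ≤ q.k * z, LetterWalk (coreEdges w I b) b n' x y := by
  classical
  let S := ((Finset.univ.filter fun i => i ∉ I ∧ b ∈ w i).sigma fun i =>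
    Finset.range (w i).length).image fun e =>
      (pathVertex q w e.1 e.2, b, pathVertex q w e.1 (e.2 + 1))
  obtain ⟨n', hn', h'⟩ := h.exists_le_card S fun u v huv => by
    obtain ⟨i, hi, t, ht, hb, he⟩ := huv
    refine Finset.mem_image.2 ⟨⟨i, t⟩, ?_, he.symm⟩
    simp only [Finset.mem_sigma, Finset.mem_filter, Finset.mem_univ, Finset.mem_range]
    exact ⟨⟨trivial, hi, hb ▸ List.get_mem _ _⟩, ht⟩
  refine ⟨n', hn'.trans (Finset.card_image_le.trans ?_), h'⟩
  rw [Finset.card_sigma]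
  calc ∑ i ∈ Finset.univ.filter (fun i => i ∉ I ∧ b ∈ w i), (Finset.range (w i).length).card
      ≤ ∑ i ∈ Finset.univ.filter (fun i => i ∉ I ∧ b ∈ w i), z :=
        Finset.sum_le_sum fun i hi => by
          simpa using hz i (Finset.mem_filter.1 hi).2.1 (Finset.mem_filter.1 hi).2.2
    _ ≤ q.k * z := by
        rw [Finset.sum_const, smul_eq_mul]
        exact Nat.mul_le_mul_right z ((Finset.card_filter_le _ _).trans (by simp))

end Pumping

section Compress

variable [Finite V] {q : CRPQ α V} {w : Fin q.k → List α} {I : Finset (Fin q.k)}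
  {c : Fin q.k → α} {T : ℕ}

def PumpInterior (w : Fin q.k → List α) (I : Finset (Fin q.k)) (c : Fin q.k → α) (T : ℕ)
    (u : (expansion q (pumpWords w I c T)).V) : Prop :=
  ∃ i ∈ I, ∃ p, 0 < p ∧ p < T ∧ u = pathVertex q (pumpWords w I c T) i p

theorem eq_of_pathVertex_pump_eq {i j : Fin q.k} (hi : i ∈ I) {p t : ℕ} (hp : 0 < p) (hpT : p < T)
    (ht : t ≤ (pumpWords w I c T j).length)
    (h : pathVertex q (pumpWords w I c T) j t = pathVertex q (pumpWords w I c T) i p) :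
    j = i ∧ t = p :=
  eq_of_pathVertex_eq ht ⟨hp, by simpa [pumpWords_of_mem hi] using hpT⟩ h

theorem position_pathVertex_pump {i : Fin q.k} (hi : i ∈ I) {t : ℕ} (ht : t < T) :
    position (pathVertex q (pumpWords w I c T) i t) = t :=
  position_pathVertex (by simpa [pumpWords_of_mem hi] using ht)

theorem not_pumpInterior_top {i : Fin q.k} (hi : i ∈ I) :
    ¬ PumpInterior w I c T (pathVertex q (pumpWords w I c T) i T) := by
  rintro ⟨j, hj, p, hp, hpT, h⟩
  have := (eq_of_pathVertex_pump_eq hj hp hpT (by simp [pumpWords_of_mem hi]) h).2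
  omega

theorem mem_atoms_pump_of_interior {i : Fin q.k} (hi : i ∈ I) {p : ℕ} (hp : 0 < p)
    (hpT : p < T) {b : α} {v : (expansion q (pumpWords w I c T)).V}
    (h : (pathVertex q (pumpWords w I c T) i p, b, v) ∈ (expansion q (pumpWords w I c T)).atoms) :
    c i = b ∧ v = pathVertex q (pumpWords w I c T) i (p + 1) := by
  rcases mem_atoms_pump h with ⟨j, hj, t, ht, -, hu, -⟩ | ⟨j, hj, t, htT, hb, hu, hv⟩
  · have := eq_of_pathVertex_pump_eq hi hp hpT (by simp [pumpWords_of_not_mem hj]; omega) hu.symm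
    exact absurd (this.1 ▸ hi) hj
  · obtain ⟨rfl, rfl⟩ := eq_of_pathVertex_pump_eq hi hp hpT (by simp [pumpWords_of_mem hj]; omega)
      hu.symm
    exact ⟨hb, hv⟩

theorem mem_atoms_pump_into_interior {i : Fin q.k} (hi : i ∈ I) {p : ℕ} (hp : 0 < p)
    (hpT : p < T) {b : α} {u : (expansion q (pumpWords w I c T)).V}
    (h : (u, b, pathVertex q (pumpWords w I c T) i p) ∈ (expansion q (pumpWords w I c T)).atoms)
    (hu : ¬ PumpInterior w I c T u) :
    p = 1 ∧ c i = b ∧ u = pathVertex q (pumpWords w I c T) i 0 := by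
  rcases mem_atoms_pump h with ⟨j, hj, t, ht, -, -, hv⟩ | ⟨j, hj, t, htT, hb, rfl, hv⟩
  · have := eq_of_pathVertex_pump_eq hi hp hpT (by simp [pumpWords_of_not_mem hj]; omega) hv.symm
    exact absurd (this.1 ▸ hi) hj
  · obtain ⟨rfl, rfl⟩ := eq_of_pathVertex_pump_eq hi hp hpT (by simp [pumpWords_of_mem hj]; omega)
      hv.symm
    rcases Nat.eq_zero_or_pos t with rfl | ht0
    · exact ⟨rfl, hb, rfl⟩
    · exact absurd ⟨j, hj, t, ht0, htT, rfl⟩ hu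

theorem eq_pathVertex_along_run {b : α} {L : ℕ} {f : ℕ → (expansion q (pumpWords w I c T)).V}
    (hf : ∀ t < L, (f t, b, f (t + 1)) ∈ (expansion q (pumpWords w I c T)).atoms)
    {i : Fin q.k} (hi : i ∈ I) {p : ℕ} (hp : 0 < p) (h0 : f 0 = pathVertex q _ i p) :
    ∀ s ≤ L, p + s ≤ T → f s = pathVertex q (pumpWords w I c T) i (p + s) := by
  intro s
  induction s with
  | zero => intro _ _; exact h0
  | succ s ih =>
    intro hs hsT
    have := mem_atoms_pump_of_interior hi (by omega) (by omega)
      (ih (by omega) (by omega) ▸ hf s (by omega))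
    rw [this.2, add_assoc]

variable {F : Fin q.k → ℕ → ℕ} {hT : T ≠ 0} {P : Finset ℕ} {m B : ℕ}

theorem compress_mem_coreEdges (hT2 : 2 ≤ T) {u v : (expansion q (pumpWords w I c T)).V}
    {b : α} (h : (u, b, v) ∈ (expansion q (pumpWords w I c T)).atoms)
    (hu : ¬ PumpInterior w I c T u) (hv : ¬ PumpInterior w I c T v) :
    (compress F hT u, b, compress F hT v) ∈ coreEdges w I b := by
  rcases mem_atoms_pump h with ⟨i, hi, t, ht, hb, rfl, rfl⟩ | ⟨i, hi, t, htT, -, rfl, rfl⟩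
  · rw [compress_pathVertex_of_not_mem hi ht.le, compress_pathVertex_of_not_mem hi ht]
    exact ⟨i, hi, t, ht, hb, rfl⟩
  · rcases Nat.eq_zero_or_pos t with rfl | ht0
    · exact absurd ⟨i, hi, 1, one_pos, by omega, rfl⟩ hv
    · exact absurd ⟨i, hi, t, ht0, htT, rfl⟩ hu

theorem letterWalk_compress_run {i : Fin q.k} (hi : i ∈ I)
    (hF : IsCompression (F i) P m T (w i).length B)
    (hw : w i = List.replicate (w i).length (c i)) {t t' : ℕ} (htt' : t ≤ t') (ht' : t' ≤ T) :
    LetterWalk (expansion q w).atoms (c i) (F i t' - F i t)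
      (compress F hT (pathVertex q (pumpWords w I c T) i t))
      (compress F hT (pathVertex q (pumpWords w I c T) i t')) := by
  rw [compress_pathVertex_of_mem hi hF (htt'.trans ht'), compress_pathVertex_of_mem hi hF ht']
  exact letterWalk_pathVertex hw (hF.mono htt') (hF.map_top ▸ hF.mono ht')

theorem compress_mem_atoms (hF : ∀ i ∈ I, IsCompression (F i) P m T (w i).length B)
    (hw : ∀ i ∈ I, w i = List.replicate (w i).length (c i))
    {u v : (expansion q (pumpWords w I c T)).V} {b : α}
    (h : (u, b, v) ∈ (expansion q (pumpWords w I c T)).atoms)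
    (hu : ∀ i ∈ I, c i = b → ∀ t < T, u = pathVertex q (pumpWords w I c T) i t → t ∈ P) :
    (compress F hT u, b, compress F hT v) ∈ (expansion q w).atoms := by
  rcases mem_atoms_pump h with ⟨i, hi, t, ht, hb, rfl, rfl⟩ | ⟨i, hi, t, htT, hb, rfl, rfl⟩
  · rw [compress_pathVertex_of_not_mem hi ht.le, compress_pathVertex_of_not_mem hi ht, ← hb]
    exact pathVertex_mem_atoms i ht
  · have hstep := (hF i hi).step t (hu i hi hb t htT rfl) htT
    have hlt : F i t < (w i).length := by
      have := (hF i hi).mono (show t + 1 ≤ T by omega)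
      rw [(hF i hi).map_top] at this
      omega
    rw [compress_pathVertex_of_mem hi (hF i hi) htT.le,
      compress_pathVertex_of_mem hi (hF i hi) htT, hstep]
    have hlab : (w i).get ⟨F i t, hlt⟩ = c i :=
      (List.eq_replicate_iff.1 (hw i hi)).2 _ (List.get_mem _ _)
    have := pathVertex_mem_atoms (q := q) i hlt
    rwa [hlab, hb] at this

end Compress

section CompressWalk

variable [Finite V] {q : CRPQ α V} {w : Fin q.k → List α} {I : Finset (Fin q.k)}
  {c : Fin q.k → α} {T : ℕ} {F : Fin q.k → ℕ → ℕ} {hT : T ≠ 0} {b : α} {L : ℕ}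
  {f : ℕ → (expansion q (pumpWords w I c T)).V}

/-- A walk of length `< T` that enters a run cannot leave it again. -/
theorem letterWalk_coreEdges_or_enters_run (hT2 : 2 ≤ T) (hLT : L < T)
    (hf : ∀ t < L, (f t, b, f (t + 1)) ∈ (expansion q (pumpWords w I c T)).atoms)
    (h0 : ¬ PumpInterior w I c T (f 0)) :
    ∀ s ≤ L, (¬ PumpInterior w I c T (f s) ∧
        ∃ n, LetterWalk (coreEdges w I b) b n (compress F hT (f 0)) (compress F hT (f s))) ∨
      ∃ i ∈ I, c i = b ∧ ∃ p, 0 < p ∧ p ≤ s ∧ f s = pathVertex q (pumpWords w I c T) i p ∧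
        ∃ n, LetterWalk (coreEdges w I b) b n (compress F hT (f 0))
          (compress F hT (pathVertex q (pumpWords w I c T) i 0)) := by
  intro s
  induction s with
  | zero => exact fun _ => Or.inl ⟨h0, 0, LetterWalk.refl _⟩
  | succ s ih =>
    intro hs
    have he := hf s (by omega)
    rcases ih (by omega) with ⟨hs0, n, hn⟩ | ⟨i, hi, hib, p, hp, hps, hfs, hn⟩
    · by_cases hs1 : PumpInterior w I c T (f (s + 1))
      · obtain ⟨i, hi, p, hp, hpT, hfs1⟩ := hs1
        rw [hfs1] at he
        obtain ⟨rfl, hib, hfs⟩ := mem_atoms_pump_into_interior hi hp hpT he hs0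
        exact Or.inr ⟨i, hi, hib, 1, one_pos, by omega, hfs1, n, hfs ▸ hn⟩
      · exact Or.inl ⟨hs1, n + 1, hn.trans (.single (compress_mem_coreEdges hT2 he hs0 hs1))⟩
    · rw [hfs] at he
      obtain ⟨-, hfs1⟩ := mem_atoms_pump_of_interior hi hp (by omega) he
      exact Or.inr ⟨i, hi, hib, p + 1, by omega, by omega, hfs1, hn⟩

variable {P : Finset ℕ} {m B z : ℕ}

theorem exists_letterWalk_compress_of_not_interior (hT2 : 2 ≤ T) (hmT : m < T)
    (hF : ∀ i ∈ I, IsCompression (F i) P m T (w i).length B)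
    (hw : ∀ i ∈ I, w i = List.replicate (w i).length (c i))
    (hz : ∀ i ∉ I, b ∈ w i → (w i).length ≤ z) (hLm : L ≤ m)
    (hf : ∀ t < L, (f t, b, f (t + 1)) ∈ (expansion q (pumpWords w I c T)).atoms)
    (h0 : ¬ PumpInterior w I c T (f 0)) :
    ∃ n ≤ q.k * z + B,
      LetterWalk (expansion q w).atoms b n (compress F hT (f 0)) (compress F hT (f L)) := by
  rcases letterWalk_coreEdges_or_enters_run (F := F) (hT := hT) hT2 (by omega) hf h0 L le_rfl with
    ⟨-, n, hn⟩ | ⟨i, hi, rfl, p, hp, hpL, hfL, n, hn⟩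
  · obtain ⟨n', hn', h'⟩ := hn.exists_le_coreEdges hz
    exact ⟨n', by omega, h'.mono fun _ _ h => coreEdges_subset h⟩
  · obtain ⟨n', hn', h'⟩ := hn.exists_le_coreEdges hz
    have hrun := letterWalk_compress_run (hT := hT) hi (hF i hi) (hw i hi) (Nat.zero_le p)
      (by omega)
    rw [← hfL, (hF i hi).map_zero, Nat.sub_zero] at hrun
    exact ⟨n' + F i p, by have := (hF i hi).near_start p (by omega); omega,
      (h'.mono fun _ _ h => coreEdges_subset h).trans hrun⟩

theorem exists_letterWalk_compress_of_interior (hT2 : 2 ≤ T) (hmT : m < T)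
    (hF : ∀ i ∈ I, IsCompression (F i) P m T (w i).length B)
    (hw : ∀ i ∈ I, w i = List.replicate (w i).length (c i))
    (hz : ∀ i ∉ I, b ∈ w i → (w i).length ≤ z) (hLm : L ≤ m)
    (hf : ∀ t < L, (f t, b, f (t + 1)) ∈ (expansion q (pumpWords w I c T)).atoms)
    {i : Fin q.k} (hi : i ∈ I) {p : ℕ} (hp : 0 < p) (hpT : p < T) (hpP : p ∈ P)
    (hf0 : f 0 = pathVertex q (pumpWords w I c T) i p) :
    ∃ n ≤ B + (q.k * z + B),
      LetterWalk (expansion q w).atoms b n (compress F hT (f 0)) (compress F hT (f L)) := by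
  rcases Nat.eq_zero_or_pos L with rfl | hL
  · exact ⟨0, by omega, LetterWalk.refl _⟩
  obtain ⟨rfl, -⟩ := mem_atoms_pump_of_interior hi hp hpT (hf0 ▸ hf 0 hL)
  have hrun := eq_pathVertex_along_run hf hi hp hf0
  by_cases hpL : p + L ≤ T
  · refine ⟨F i (p + L) - F i p, ?_, ?_⟩
    · have := (hF i hi).near_special p hpP L hLm
      omega
    · rw [hf0, hrun L le_rfl hpL]
      exact letterWalk_compress_run hi (hF i hi) (hw i hi) (by omega) hpL
  set s₀ := T - p
  have hfs₀ : f s₀ = pathVertex q (pumpWords w I c T) i T := by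
    rw [hrun s₀ (by omega) (by omega)]
    congr 1
    omega
  have hfirst := letterWalk_compress_run (hT := hT) hi (hF i hi) (hw i hi) hpT.le le_rfl
  rw [← hf0, ← hfs₀, (hF i hi).map_top] at hfirst
  obtain ⟨n, hn, hrest⟩ := exists_letterWalk_compress_of_not_interior (f := fun s => f (s₀ + s))
    (L := L - s₀) hT2 hmT hF hw hz (by omega)
    (fun t ht => by simpa [add_assoc] using hf (s₀ + t) (by omega))
    (by simpa [hfs₀] using not_pumpInterior_top hi)
  simp only [Nat.add_zero, show s₀ + (L - s₀) = L by omega] at hrest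
  refine ⟨_ + n, ?_, hfirst.trans hrest⟩
  have := (hF i hi).near_end p (by omega)
  omega

/-- The bound is `B` (the rest of the run the walk starts in) `+ q.k * z` (the core) `+ B`
(the start of the run it ends in). -/
theorem exists_letterWalk_compress (hT2 : 2 ≤ T) (hmT : m < T)
    (hF : ∀ i ∈ I, IsCompression (F i) P m T (w i).length B)
    (hw : ∀ i ∈ I, w i = List.replicate (w i).length (c i))
    (hz : ∀ i ∉ I, b ∈ w i → (w i).length ≤ z) (hLm : L ≤ m)
    (hf : ∀ t < L, (f t, b, f (t + 1)) ∈ (expansion q (pumpWords w I c T)).atoms)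
    (h0 : ∀ i ∈ I, ∀ t < T, f 0 = pathVertex q (pumpWords w I c T) i t → t ∈ P) :
    ∃ n ≤ B + (q.k * z + B),
      LetterWalk (expansion q w).atoms b n (compress F hT (f 0)) (compress F hT (f L)) := by
  by_cases hint : PumpInterior w I c T (f 0)
  · obtain ⟨i, hi, p, hp, hpT, hf0⟩ := hint
    exact exists_letterWalk_compress_of_interior hT2 hmT hF hw hz hLm hf hi hp hpT
      (h0 i hi p hpT hf0) hf0
  · obtain ⟨n, hn, h⟩ := exists_letterWalk_compress_of_not_interior hT2 hmT hF hw hz hLm hf hint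
    exact ⟨n, by omega, h⟩

end CompressWalk

section CompressWord

variable [Finite V] {q : CRPQ α V} {w : Fin q.k → List α} {I : Finset (Fin q.k)}
  {c : Fin q.k → α} {T : ℕ} {F : Fin q.k → ℕ → ℕ} {hT : T ≠ 0} {P : Finset ℕ} {m B z : ℕ}
  {A : Set α} {Z : ℕ}

theorem exists_word_compress (hT2 : 2 ≤ T) (hmT : m < T)
    (hF : ∀ i ∈ I, IsCompression (F i) P m T (w i).length B)
    (hw : ∀ i ∈ I, w i = List.replicate (w i).length (c i)) (hcA : ∀ i ∈ I, c i ∈ A)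
    (hz : ∀ b ∈ A, ∀ i ∉ I, b ∈ w i → (w i).length ≤ z) (hZ : B + (q.k * z + B) ≤ Z)
    {l : AtomLang α} (hl : l.in_a_aStar) {u : List α} (hu : u ∈ l.language)
    (hlen : ∀ b ∈ A, l = .star [b] → u.length ≤ m) {x y : (expansion q (pumpWords w I c T)).V}
    (hxy : WordWalk (expansion q (pumpWords w I c T)).atoms u x y)
    (hx : ∀ i ∈ I, ∀ t < T, x = pathVertex q (pumpWords w I c T) i t → t ∈ P) :
    ∃ u' ∈ (l.restrict A Z).language,
      WordWalk (expansion q w).atoms u' (compress F hT x) (compress F hT y) := by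
  obtain ⟨a, rfl | rfl⟩ := AtomLang.in_a_aStar_iff.1 hl
  · obtain rfl : u = [a] := hu
    exact ⟨[a], rfl, wordWalk_singleton.2
      (compress_mem_atoms hF hw (wordWalk_singleton.1 hxy) fun i hi _ => hx i hi)⟩
  obtain ⟨n, rfl⟩ := mem_language_star_singleton.1 hu
  obtain ⟨f, rfl, rfl, hf⟩ := wordWalk_replicate.1 hxy
  by_cases ha : a ∈ A
  · have hnm : n ≤ m := by simpa using hlen a ha rfl
    obtain ⟨n', hn', h'⟩ := exists_letterWalk_compress hT2 hmT hF hw (hz a ha) hnm hf hx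
    exact ⟨_, replicate_mem_language_restrict fun _ => hn'.trans hZ, wordWalk_replicate.2 h'⟩
  · refine ⟨List.replicate n a, replicate_mem_language_restrict fun h => absurd h ha,
      wordWalk_replicate.2 ?_⟩
    exact LetterWalk.map _ (fun _ _ h => compress_mem_atoms hF hw h fun i hi hia =>
      absurd (hia ▸ hcA i hi) ha) ⟨f, rfl, rfl, hf⟩

end CompressWord

section Bound

variable {Q : List (SCRPQ α V)}

theorem k_le_natoms {d : SCRPQ α V} (hd : d ∈ Q) : d.k ≤ natoms Q :=
  List.single_le_sum (by simp) _ (List.mem_map_of_mem hd)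

theorem two_le_natoms {d d' : SCRPQ α V} (hd : d ∈ Q) (hd' : d' ∈ Q) {i : Fin d.k}
    {i' : Fin d'.k} (h : d.lang i ≠ d'.lang i') : 2 ≤ natoms Q := by
  classical
  by_cases hdd : d = d'
  · subst hdd
    have hii : (i : ℕ) ≠ i' := fun h' => h (by rw [Fin.ext h'])
    have := k_le_natoms hd
    omega
  · have hsum : natoms Q = d.k + natoms (Q.erase d) := by
      rw [natoms, ((List.perm_cons_erase hd).map SCRPQ.k).sum_eq]
      rfl
    have := k_le_natoms ((List.mem_erase_of_ne (Ne.symm hdd)).2 hd')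
    have := i.isLt
    have := i'.isLt
    omega

theorem nrBound_eq_one (hclass : ∀ d ∈ Q, ∀ i : Fin d.k, (d.lang i).in_a_aStar)
    (hssf : ∃ d ∈ Q, ∃ i : Fin d.k, ∃ L hL, d.lang i = .ssf L hL) :
    nrBound Q = 1 := by
  suffices h : {n | ∃ d ∈ Q, ∃ i : Fin d.k, ∃ (L : Set (List α)) (h : L.Finite),
      d.lang i = AtomLang.ssf L h ∧ ∃ u ∈ L, u.length = n} = {1} by
    rw [nrBound, h, csSup_singleton]
  ext n
  constructor
  · rintro ⟨d, hd, i, L, hL, hl, u, hu, rfl⟩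
    obtain ⟨a, rfl⟩ : ∃ a, L = {[a]} := by simpa [AtomLang.in_a_aStar, hl] using hclass d hd i
    simp [show u = [a] from hu]
  · rintro rfl
    obtain ⟨d, hd, i, L, hL, hl⟩ := hssf
    obtain ⟨a, rfl⟩ : ∃ a, L = {[a]} := by simpa [AtomLang.in_a_aStar, hl] using hclass d hd i
    exact ⟨d, hd, i, _, hL, hl, [a], rfl, rfl⟩

theorem finprod_recWords_length (hclass : ∀ d ∈ Q, ∀ i : Fin d.k, (d.lang i).in_a_aStar) :
    ∏ᶠ w ∈ recWords Q, w.length = 1 :=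
  finprod_mem_of_eqOn_one fun w ⟨d, hd, i, hl⟩ => by
    obtain ⟨a, rfl⟩ : ∃ a, w = [a] := by simpa [AtomLang.in_a_aStar, hl] using hclass d hd i
    rfl

theorem Zbound_eq [Fintype V] (hclass : ∀ d ∈ Q, ∀ i : Fin d.k, (d.lang i).in_a_aStar)
    (hssf : ∃ d ∈ Q, ∃ i : Fin d.k, ∃ L hL, d.lang i = .ssf L hL) :
    Zbound Q = natoms Q ^ 3 * Fintype.card V := by
  rw [Zbound, nrBound_eq_one hclass hssf, finprod_recWords_length hclass, mul_one, mul_one]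

end Bound

section Restrict

variable {A : Set α} {Z : ℕ} {G : GDB α}

theorem SatWith.restrict {d : SCRPQ α V} {w : Fin d.k → List α} (hw : SatWith G d w)
    (h : ∀ i, w i ∈ ((d.lang i).restrict A Z).language) :
    SatWith G (d.restrict A Z) w :=
  ⟨h, hw.2⟩

theorem satS_of_satS_qrestrict [Finite V] {Q : List (SCRPQ α V)}
    (h : SatS (qrestrict Q A Z) G) : SatS Q G := by
  obtain ⟨_, hd', w, hw, hρ⟩ := satS_iff.1 h
  obtain ⟨d, hd, rfl⟩ := List.mem_map.1 hd'
  exact satS_iff.2 ⟨d, hd, w, fun i => language_restrict_subset _ (hw i), hρ⟩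

end Restrict

section MainCase

variable {Q : List (SCRPQ α V)} {A : Set α} {Z : ℕ} {G : GDB α} {d : SCRPQ α V}
  {w : Fin d.k → List α}

theorem pumpWords_mem_language {I : Finset (Fin d.k)} {c : Fin d.k → α} {T : ℕ}
    (hw : ∀ i, w i ∈ (d.lang i).language) (hI : ∀ i ∈ I, d.lang i = .star [c i])
    (i : Fin d.k) : pumpWords (q := d.toCRPQ) w I c T i ∈ (d.lang i).language := by
  simp only [pumpWords]
  split
  next hi =>
    rw [hI i hi]
    exact mem_language_star_singleton.2 ⟨T, rfl⟩
  next => exact hw i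

variable [Fintype V]

theorem satS_qrestrict_of_pump (hclass : ∀ d ∈ Q, ∀ i : Fin d.k, (d.lang i).in_a_aStar)
    {m : ℕ} (hm : ∀ G, SatS Q G → ∃ d ∈ Q, ∃ w, SatWith G d w ∧
      ∀ i, ∀ b ∈ A, d.lang i = .star [b] → (w i).length ≤ m)
    (hZ : 2 * Fintype.card V * (natoms Q + 1) ≤ Z) (hd : d ∈ Q) (hw : SatWith G d w)
    {I : Finset (Fin d.k)} {c : Fin d.k → α}
    (hI : ∀ i ∈ I, d.lang i = .star [c i] ∧ c i ∈ A ∧ 2 * Fintype.card V ≤ (w i).length)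
    (hz : ∀ b ∈ A, ∀ i ∉ I, b ∈ w i → (w i).length ≤ 2 * Fintype.card V) :
    SatS (qrestrict Q A Z) G := by
  classical
  set v := Fintype.card V
  set T := 2 * m + v * (2 * m + 1) + 2
  have hwI : ∀ i ∈ I, w i = List.replicate (w i).length (c i) := fun i hi => by
    obtain ⟨n, hn⟩ := mem_language_star_singleton.1 ((hI i hi).1 ▸ hw.1 i)
    simp [hn]
  obtain ⟨d', hd', w', ⟨hw', ρ, hρ⟩, hlen⟩ := hm _ (satS_iff.2 ⟨d, hd, _,
    satWith_expansion (pumpWords_mem_language (T := T) hw.1 fun i hi => (hI i hi).1)⟩)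
  let P : Finset ℕ := Finset.univ.image fun x => position (ρ x)
  have hPv : P.card ≤ v := Finset.card_image_le.trans (by simp [v])
  have hP : ∀ x, ∀ i ∈ I, ∀ t < T, ρ x = pathVertex d.toCRPQ (pumpWords w I c T) i t → t ∈ P :=
    fun x i hi t ht h =>
      Finset.mem_image.2 ⟨x, Finset.mem_univ _, h ▸ position_pathVertex_pump hi ht⟩
  obtain ⟨F, hF⟩ := exists_isCompression_forall P (m := m) (T := T) (n := fun i => (w i).length)
    (S := (I : Set (Fin d.k)))
    (fun i hi => by have := (hI i hi).2.2; omega)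
    (by have := Nat.mul_le_mul_right (2 * m + 1) hPv; omega)
  have hbound : P.card + (d.k * (2 * v) + P.card) ≤ Z := by
    have := Nat.mul_le_mul_right (2 * v) (k_le_natoms hd)
    nlinarith
  have hT : T ≠ 0 := by omega
  choose u hu hwalk using fun ι => exists_word_compress (hT := hT) (by omega) (by omega)
    hF hwI (fun i hi => (hI i hi).2.1) hz hbound (hclass d' hd' ι) (hw' ι) (hlen ι) (hρ ι)
    (hP _)
  exact satS_iff.2 ⟨d'.restrict A Z, List.mem_map_of_mem hd', u,
    SatWith.of_homToG ((expansion_homToG_iff G).2 hw.2) ⟨hu, fun x => compress F hT (ρ x), hwalk⟩⟩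

theorem satS_qrestrict_of_satWith (hclass : ∀ d ∈ Q, ∀ i : Fin d.k, (d.lang i).in_a_aStar)
    (hA : BddIn Q A) (hZ : 2 * Fintype.card V * (natoms Q + 1) ≤ Z) (hd : d ∈ Q)
    (hw : SatWith G d w) : SatS (qrestrict Q A Z) G := by
  classical
  obtain ⟨m, hm⟩ := hA.exists_bound
  choose c hc using fun i => AtomLang.in_a_aStar_iff.1 (hclass d hd i)
  let I : Finset (Fin d.k) := Finset.univ.filter fun i =>
    d.lang i = .star [c i] ∧ c i ∈ A ∧ 2 * Fintype.card V < (w i).length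
  refine satS_qrestrict_of_pump hclass hm hZ hd hw (I := I) (c := c)
    (fun i hi => (Finset.mem_filter.1 hi).2.imp_right (And.imp_right le_of_lt)) ?_
  intro b hb i hi hbw
  have hv : 0 < Fintype.card V := Fintype.card_pos_iff.2 ⟨d.src i⟩
  have hwi := hw.1 i
  rcases hc i with hl | hl <;> rw [hl] at hwi
  · rw [show w i = [c i] from hwi, List.length_singleton]
    omega
  · obtain ⟨n, hn⟩ := mem_language_star_singleton.1 hwi
    have hbc : b = c i := List.eq_of_mem_replicate (hn ▸ hbw)
    by_contra hlt
    exact hi (Finset.mem_filter.2 ⟨Finset.mem_univ _, hl, hbc ▸ hb, by omega⟩)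

end MainCase

section Degenerate

variable [Finite V] {Q : List (SCRPQ α V)} {A : Set α} {Z : ℕ} {G : GDB α} {d : SCRPQ α V}

theorem satS_qrestrict_of_forall_ne_star (hd : d ∈ Q) {w : Fin d.k → List α}
    (hw : SatWith G d w) (h : ∀ i, ∀ b ∈ A, d.lang i ≠ .star [b]) :
    SatS (qrestrict Q A Z) G := by
  refine satS_iff.2 ⟨_, List.mem_map_of_mem hd, w, hw.restrict fun i => ?_⟩
  rw [restrict_eq_self (h i)]
  exact hw.1 i

theorem satS_qrestrict_of_forall_ne_ssf (hclass : ∀ i : Fin d.k, (d.lang i).in_a_aStar)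
    (hssf : ∀ i L hL, d.lang i ≠ .ssf L hL) (hd : d ∈ Q) (x : G.V) :
    SatS (qrestrict Q A Z) G := by
  refine satS_iff.2 ⟨_, List.mem_map_of_mem hd, fun _ => [], fun i => ?_, fun _ => x,
    fun _ => WordWalk.nil x⟩
  obtain ⟨b, hb | hb⟩ := AtomLang.in_a_aStar_iff.1 (hclass i)
  · exact absurd hb (hssf i _ _)
  · simpa [SCRPQ.restrict, hb] using
      replicate_mem_language_restrict (A := A) (Z := Z) (n := 0) (b := b) fun _ => Nat.zero_le Z

end Degenerate

theorem statement15_general {α V : Type} [Fintype V] (q : List (SCRPQ α V))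
    (hclass : ∀ d ∈ q, ∀ i : Fin d.k, (d.lang i).in_a_aStar) (A : Set α)
    (hA : BddIn q A) :
    QEquiv (SatS q) (SatS (qrestrict q A (Zbound q))) := by
  refine fun G => ⟨fun h => ?_, satS_of_satS_qrestrict⟩
  obtain ⟨d, hd, w, hw⟩ := satS_iff.1 h
  by_cases hstar : ∃ i, ∃ b ∈ A, d.lang i = .star [b]
  swap
  · push Not at hstar
    exact satS_qrestrict_of_forall_ne_star hd hw hstar
  obtain ⟨i₀, b₀, -, hi₀⟩ := hstar
  by_cases hssf : ∃ d' ∈ q, ∃ i : Fin d'.k, ∃ L hL, d'.lang i = .ssf L hL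
  swap
  · push Not at hssf
    exact satS_qrestrict_of_forall_ne_ssf (hclass d hd) (hssf d hd) hd (hw.2.choose (d.src i₀))
  obtain ⟨d', hd', i', L, hL, hi'⟩ := hssf
  have hK := two_le_natoms hd hd' (i := i₀) (i' := i') (by rw [hi₀, hi']; simp)
  refine satS_qrestrict_of_satWith hclass hA ?_ hd hw
  rw [Zbound_eq hclass ⟨d', hd', i', L, hL, hi'⟩]
  have : 2 * (natoms q + 1) ≤ natoms q ^ 3 := by
    nlinarith [Nat.mul_le_mul_right (natoms q) (Nat.mul_le_mul hK hK)]
  nlinarith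

/-- if `q ∈ UCRPQ(a, a*)` is `A`-bounded then `q ≡ q(A, Z)` for
`Z = ‖q‖³ · N · |vars(q)| · Π_{w ∈ W} |w|`. -/
theorem statement15 {α V : Type} [Fintype α] [Fintype V] (q : List (SCRPQ α V))
    (hclass : ∀ d ∈ q, ∀ i : Fin d.k, (d.lang i).in_a_aStar) (A : Set α)
    (hA : BddIn q A) :
    QEquiv (SatS q) (SatS (qrestrict q A (Zbound q))) :=
  statement15_general q hclass A hA

end Paper
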